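/- Let σ > 0 and α > 0, let Φ denote the cumulative distribution function of the standard Gaussian distribution and φ its density, and define h(x) = Φ(x/σ), so that h'(x) = φ(x/σ)/σ. Then for all x with |x| ≤ α, h'(x)/h(x) + h'(x)/(1 - h(x)) ≤ 2·h'(0)/h(-α). -/
import Mathlib


open MeasureTheory

/-- Density of the standard Gaussian distribution. -/
noncomputable def stdGaussianPDF (x : ℝ) : ℝ :=
  (Real.sqrt (2 * Real.pi))⁻¹ * Real.exp (-(x ^ 2) / 2)

/-- Cumulative distribution function of the standard Gaussian distribution. -/
noncomputable def stdGaussianCDF (x : ℝ) : ℝ :=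
  ∫ t in Set.Iic x, stdGaussianPDF t

lemma stdGaussianPDF_pos (x : ℝ) : 0 < stdGaussianPDF x := by
  unfold stdGaussianPDF
  positivity

lemma stdGaussianPDF_le (x : ℝ) : stdGaussianPDF x ≤ stdGaussianPDF 0 := by
  unfold stdGaussianPDF
  have he : Real.exp (-(x ^ 2) / 2) ≤ Real.exp (-(0 ^ 2) / 2) :=
    Real.exp_le_exp.2 (by nlinarith [sq_nonneg x])
  exact mul_le_mul_of_nonneg_left he (by positivity)

lemma stdGaussianPDF_even (x : ℝ) : stdGaussianPDF (-x) = stdGaussianPDF x := by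
  simp [stdGaussianPDF]

lemma stdGaussianPDF_integrable : Integrable stdGaussianPDF := by
  have : stdGaussianPDF = fun x => (Real.sqrt (2 * Real.pi))⁻¹ * Real.exp (-(1/2) * x ^ 2) := by
    funext x; unfold stdGaussianPDF; ring_nf
  rw [this]
  exact (integrable_exp_neg_mul_sq (by norm_num)).const_mul _

lemma stdGaussianPDF_integral : ∫ x, stdGaussianPDF x = 1 := by
  have h1 : ∫ x : ℝ, Real.exp (-(1/2 : ℝ) * x ^ 2) = Real.sqrt (Real.pi / (1/2)) :=
    integral_gaussian (1/2)
  have : ∫ x, stdGaussianPDF x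
      = (Real.sqrt (2 * Real.pi))⁻¹ * ∫ x : ℝ, Real.exp (-(1/2 : ℝ) * x ^ 2) := by
    rw [← integral_const_mul]
    congr 1; funext x; unfold stdGaussianPDF; ring_nf
  rw [this, h1]
  rw [show Real.pi / (1/2) = 2 * Real.pi by ring]
  rw [inv_mul_cancel₀]
  positivity

lemma stdGaussianCDF_pos (x : ℝ) : 0 < stdGaussianCDF x := by
  unfold stdGaussianCDF
  rw [setIntegral_pos_iff_support_of_nonneg_ae
      (Filter.Eventually.of_forall fun t => (stdGaussianPDF_pos t).le)
      (stdGaussianPDF_integrable.integrableOn)]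
  have : Function.support stdGaussianPDF = Set.univ := by
    ext t; simp [(stdGaussianPDF_pos t).ne']
  rw [this, Set.univ_inter]
  simp

lemma stdGaussianCDF_mono {a b : ℝ} (hab : a ≤ b) : stdGaussianCDF a ≤ stdGaussianCDF b := by
  unfold stdGaussianCDF
  apply setIntegral_mono_set stdGaussianPDF_integrable.integrableOn
    (Filter.Eventually.of_forall fun t => (stdGaussianPDF_pos t).le)
  exact Filter.Eventually.of_forall (Set.Iic_subset_Iic.2 hab)

lemma stdGaussianCDF_compl (x : ℝ) :
    1 - stdGaussianCDF x = stdGaussianCDF (-x) := by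
  have key : stdGaussianCDF x + ∫ t in Set.Ioi x, stdGaussianPDF t = 1 := by
    rw [← stdGaussianPDF_integral]
    exact intervalIntegral.integral_Iic_add_Ioi stdGaussianPDF_integrable.integrableOn
      stdGaussianPDF_integrable.integrableOn
  have sym : (∫ t in Set.Ioi x, stdGaussianPDF t) = stdGaussianCDF (-x) := by
    unfold stdGaussianCDF
    rw [← integral_comp_neg_Ioi]
    congr 1; funext t; exact (stdGaussianPDF_even t).symm
  linarith

theorem stmt_14 (σ α : ℝ) (hσ : 0 < σ) (hα : 0 < α)
    (h h' : ℝ → ℝ) (hdef : ∀ x, h x = stdGaussianCDF (x / σ))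
    (hderiv : ∀ x, h' x = stdGaussianPDF (x / σ) / σ) :
    ∀ x, |x| ≤ α →
      h' x / h x + h' x / (1 - h x) ≤ 2 * h' 0 / h (-α) := by
  intro x hx
  obtain ⟨hx1, hx2⟩ := abs_le.1 hx
  have hha : 0 < h (-α) := by rw [hdef]; exact stdGaussianCDF_pos _
  have hhx : h (-α) ≤ h x := by
    rw [hdef, hdef]
    exact stdGaussianCDF_mono (by apply div_le_div_of_nonneg_right _ hσ.le; linarith)
  have hhx2 : h (-α) ≤ 1 - h x := by
    rw [hdef, hdef, stdGaussianCDF_compl]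
    rw [show -(x / σ) = (-x) / σ by ring]
    exact stdGaussianCDF_mono (by apply div_le_div_of_nonneg_right _ hσ.le; linarith)
  have hnum : ∀ y : ℝ, h' y ≤ h' 0 := by
    intro y
    rw [hderiv, hderiv, zero_div]
    gcongr
    exact stdGaussianPDF_le _
  have h0 : 0 ≤ h' 0 := by
    rw [hderiv]
    exact div_nonneg (stdGaussianPDF_pos _).le hσ.le
  have t1 : h' x / h x ≤ h' 0 / h (-α) := div_le_div₀ h0 (hnum x) hha hhx
  have t2 : h' x / (1 - h x) ≤ h' 0 / h (-α) := div_le_div₀ h0 (hnum x) hha hhx2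
  calc h' x / h x + h' x / (1 - h x) ≤ h' 0 / h (-α) + h' 0 / h (-α) := add_le_add t1 t2
    _ = 2 * h' 0 / h (-α) := by ring
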